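/- arXiv:2302.12558 — 6 statements merged into one kernel-verified Lean document; each statement's English description precedes it below -/
import Mathlib

section
/- The polynomial 1 - x² lies in the quadratic module generated by 1 - x^{2q}, truncated at degree 2q; that is, there exist a sum of squares σ₀ of degree at most 2q and a nonnegative constant c such that 1 - x² = σ₀ + c·(1 - x^{2q}). -/
/-!
Write `t = X²`. Multiplying a certificate `1 - t = σ + c (1 - tⁿ)` by `t` and adding `(1 - t)²`
gives `(1 + c) (1 - t) = ((1 - t)² + t σ) + c (1 - tⁿ⁺¹)`, so dividing by `1 + c` turns a
certificate in degree `2n` into one in degree `2n + 2`. For `n = 1` take `σ = 0`, `c = 1`.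
-/

open Polynomial

theorem one_add_mul_one_sub_eq {R : Type*} [CommRing R] {t s σ c : R}
    (h : 1 - t = σ + c * (1 - s)) :
    (1 + c) * (1 - t) = ((1 - t) ^ 2 + t * σ) + c * (1 - t * s) := by
  linear_combination t * h

theorem isSumSq_C_mul {r : ℝ} (hr : 0 ≤ r) {s : ℝ[X]} (hs : IsSumSq s) : IsSumSq (C r * s) :=
  (IsSquare.map C ⟨√r, (Real.mul_self_sqrt hr).symm⟩).isSumSq.mul hs

theorem natDegree_one_sub_X_sq_sq_add_X_sq_mul_le {R : Type*} [CommRing R] {σ : R[X]} {n : ℕ}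
    (hn : 1 ≤ n) (hσ : σ.natDegree ≤ 2 * n) :
    ((1 - X ^ 2) ^ 2 + X ^ 2 * σ).natDegree ≤ 2 * (n + 1) := by
  refine (natDegree_add_le _ _).trans (max_le ?_ ?_)
  · have : ((1 - X ^ 2) ^ 2 : R[X]).natDegree ≤ 4 := by compute_degree
    omega
  · exact natDegree_mul_le.trans (by grw [natDegree_X_pow_le, hσ]; omega)

theorem exists_certificate_succ {n : ℕ} (hn : 1 ≤ n) {σ : ℝ[X]} {c : ℝ} (hσ : IsSumSq σ)
    (hσdeg : σ.natDegree ≤ 2 * n) (hc : 0 ≤ c)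
    (h : (1 - X ^ 2 : ℝ[X]) = σ + C c * (1 - X ^ (2 * n))) :
    ∃ σ' : ℝ[X], IsSumSq σ' ∧ σ'.natDegree ≤ 2 * (n + 1) ∧
      ∃ c' : ℝ, 0 ≤ c' ∧ (1 - X ^ 2 : ℝ[X]) = σ' + C c' * (1 - X ^ (2 * (n + 1))) := by
  set τ : ℝ[X] := (1 - X ^ 2) ^ 2 + X ^ 2 * σ
  have hτ : IsSumSq τ := (IsSquare.sq _).isSumSq.add ((IsSquare.sq X).isSumSq.mul hσ)
  have hpos : (0 : ℝ) < 1 + c := by linarith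
  have key : C (1 + c) * (1 - X ^ 2) = τ + C c * (1 - X ^ (2 * (n + 1))) := by
    rw [mul_add 2 n 1, pow_add, mul_one, mul_comm (X ^ (2 * n))]
    simpa only [C_add, C_1] using one_add_mul_one_sub_eq h
  refine ⟨C (1 + c)⁻¹ * τ, isSumSq_C_mul (by positivity) hτ,
    (natDegree_C_mul_le _ _).trans (natDegree_one_sub_X_sq_sq_add_X_sq_mul_le hn hσdeg),
    (1 + c)⁻¹ * c, by positivity, ?_⟩
  calc (1 - X ^ 2 : ℝ[X]) = C (1 + c)⁻¹ * (C (1 + c) * (1 - X ^ 2)) := by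
        rw [← mul_assoc, ← C_mul, inv_mul_cancel₀ hpos.ne', C_1, one_mul]
    _ = _ := by rw [key, C_mul]; ring

theorem stmt_3 (q : ℕ) (hq : 1 ≤ q) :
    ∃ σ₀ : ℝ[X], IsSumSq σ₀ ∧ σ₀.natDegree ≤ 2 * q ∧
      ∃ c : ℝ, 0 ≤ c ∧ (1 - X ^ 2 : ℝ[X]) = σ₀ + C c * (1 - X ^ (2 * q)) := by
  induction q, hq using Nat.le_induction with
  | base => exact ⟨0, .zero, by simp, 1, zero_le_one, by simp⟩
  | succ n hn ih =>
    obtain ⟨σ, hσ, hσdeg, c, hc, h⟩ := ih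
    exact exists_certificate_succ hn hσ hσdeg hc h
end

section
/- Degree-shift lemma, part (i): Let g = (g₁,...,g_m) and h = (h₁,...,h_s) be tuples of real polynomials such that each h_i lies in the truncated quadratic module Q(g)_{deg h_i + ℓ}. Then for every d, Q(h)_d ⊆ Q(g)_{d+ℓ}. -/
open MvPolynomial

/-- The truncated quadratic module `Q(g)_r` generated by the tuple `g`,
    consisting of polynomials `σ₀ + ∑ i, σ i * g i` with each `σ` a sum of squares
    and `deg σ₀ ≤ r`, `deg (σ i * g i) ≤ r`. -/
def QMod {n m : ℕ} (g : Fin m → MvPolynomial (Fin n) ℝ) (r : ℕ) :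
    Set (MvPolynomial (Fin n) ℝ) :=
  {p | ∃ (σ₀ : MvPolynomial (Fin n) ℝ) (σ : Fin m → MvPolynomial (Fin n) ℝ),
    IsSumSq σ₀ ∧ σ₀.totalDegree ≤ r ∧
    (∀ i, IsSumSq (σ i)) ∧ (∀ i, (σ i * g i).totalDegree ≤ r) ∧
    p = σ₀ + ∑ i, σ i * g i}

namespace QMod

variable {n m : ℕ} {g : Fin m → MvPolynomial (Fin n) ℝ} {r : ℕ}

theorem mem_of_isSumSq {σ : MvPolynomial (Fin n) ℝ} (hσ : IsSumSq σ)
    (hσr : σ.totalDegree ≤ r) : σ ∈ QMod g r :=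
  ⟨σ, 0, hσ, hσr, fun _ => .zero, fun _ => by simp, by simp⟩

theorem zero_mem : (0 : MvPolynomial (Fin n) ℝ) ∈ QMod g r :=
  mem_of_isSumSq .zero (by simp)

theorem add_mem {p q : MvPolynomial (Fin n) ℝ} (hp : p ∈ QMod g r) (hq : q ∈ QMod g r) :
    p + q ∈ QMod g r := by
  obtain ⟨σ₀, σ, hσ₀, hσ₀r, hσ, hσr, rfl⟩ := hp
  obtain ⟨τ₀, τ, hτ₀, hτ₀r, hτ, hτr, rfl⟩ := hq
  refine ⟨σ₀ + τ₀, σ + τ, hσ₀.add hτ₀, (totalDegree_add _ _).trans (max_le hσ₀r hτ₀r),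
    fun i => (hσ i).add (hτ i), fun i => ?_, ?_⟩
  · rw [Pi.add_apply, add_mul]
    exact (totalDegree_add _ _).trans (max_le (hσr i) (hτr i))
  · simp only [Pi.add_apply, add_mul, Finset.sum_add_distrib]
    ring

theorem sum_mem {ι : Type*} (s : Finset ι) {p : ι → MvPolynomial (Fin n) ℝ}
    (hp : ∀ i ∈ s, p i ∈ QMod g r) : ∑ i ∈ s, p i ∈ QMod g r :=
  Finset.sum_induction _ (· ∈ QMod g r) (fun _ _ => add_mem) zero_mem hp

theorem mono {r' : ℕ} (hr : r ≤ r') : QMod g r ⊆ QMod g r' := by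
  rintro p ⟨σ₀, σ, hσ₀, hσ₀r, hσ, hσr, rfl⟩
  exact ⟨σ₀, σ, hσ₀, hσ₀r.trans hr, hσ, fun i => (hσr i).trans hr, rfl⟩

theorem isSumSq_mul_mem {τ p : MvPolynomial (Fin n) ℝ} (hτ : IsSumSq τ)
    (hp : p ∈ QMod g r) : τ * p ∈ QMod g (τ.totalDegree + r) := by
  obtain ⟨σ₀, σ, hσ₀, hσ₀r, hσ, hσr, rfl⟩ := hp
  refine ⟨τ * σ₀, fun i => τ * σ i, hτ.mul hσ₀,
    (totalDegree_mul _ _).trans (add_le_add le_rfl hσ₀r), fun i => hτ.mul (hσ i),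
    fun i => ?_, by simp only [mul_add, Finset.mul_sum, mul_assoc]⟩
  rw [mul_assoc]
  exact (totalDegree_mul _ _).trans (add_le_add le_rfl (hσr i))

/-- Degree additivity over the domain `ℝ[X]` is what lets the degree bound on `τ * p`
control the degree of `τ` alone. -/
theorem isSumSq_mul_mem_of_totalDegree_le {ℓ d : ℕ} {τ p : MvPolynomial (Fin n) ℝ}
    (hτ : IsSumSq τ) (hp : p ∈ QMod g (p.totalDegree + ℓ)) (hτp : (τ * p).totalDegree ≤ d) :
    τ * p ∈ QMod g (d + ℓ) := by
  rcases eq_or_ne τ 0 with rfl | hτ0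
  · simpa using zero_mem
  rcases eq_or_ne p 0 with rfl | hp0
  · simpa using zero_mem
  rw [totalDegree_mul_of_isDomain hτ0 hp0] at hτp
  exact mono (by omega) (isSumSq_mul_mem hτ hp)

end QMod

theorem stmt_6 {n m s : ℕ} (g : Fin m → MvPolynomial (Fin n) ℝ)
    (h : Fin s → MvPolynomial (Fin n) ℝ) (ℓ : ℕ)
    (hshift : ∀ i, h i ∈ QMod g ((h i).totalDegree + ℓ)) (d : ℕ) :
    QMod h d ⊆ QMod g (d + ℓ) := by
  rintro p ⟨τ₀, τ, hτ₀, hτ₀d, hτ, hτd, rfl⟩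
  exact QMod.add_mem (QMod.mem_of_isSumSq hτ₀ (by omega)) <|
    QMod.sum_mem _ fun i _ => QMod.isSumSq_mul_mem_of_totalDegree_le (hτ i) (hshift i) (hτd i)
end

section
/- Degree-shift lemma, part (ii): Let g₁ be a single real polynomial and h = (h₁,...,h_s) a tuple of polynomials such that each h_i ∈ Q(g₁)_{deg h_i + ℓ}. Then for every d, the truncated preordering T(h)_d is contained in Q(g₁)_{d + sℓ}. -/
open MvPolynomial

/-- The truncated quadratic module `Q(g₁)_r` generated by a single polynomial `g₁`. -/
def QModSingle {n : ℕ} (g₁ : MvPolynomial (Fin n) ℝ) (r : ℕ) :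
    Set (MvPolynomial (Fin n) ℝ) :=
  {p | ∃ σ₀ σ₁ : MvPolynomial (Fin n) ℝ,
    IsSumSq σ₀ ∧ σ₀.totalDegree ≤ r ∧
    IsSumSq σ₁ ∧ (σ₁ * g₁).totalDegree ≤ r ∧
    p = σ₀ + σ₁ * g₁}

/-- The truncated preordering `T(h)_r` generated by the tuple `h`. -/
def TPreord {n s : ℕ} (h : Fin s → MvPolynomial (Fin n) ℝ) (r : ℕ) :
    Set (MvPolynomial (Fin n) ℝ) :=
  {p | ∃ σ : Finset (Fin s) → MvPolynomial (Fin n) ℝ,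
    (∀ I, IsSumSq (σ I)) ∧ (∀ I, (σ I * ∏ i ∈ I, h i).totalDegree ≤ r) ∧
    p = ∑ I : Finset (Fin s), σ I * ∏ i ∈ I, h i}

/-!
Multiplying two elements of `Q(g₁)` gives an element of `Q(g₁)` whose degree bound is the sum of
the two bounds (the cross term `σ₁ τ₁ g₁²` is absorbed into the SOS part). Hence each factor `h_i`
of a product costs at most `ℓ` degrees beyond its own. Over the domain `ℝ[x]` the degree of a
nonzero product is the sum of the degrees, so `σ_I ∏_{i ∈ I} h_i` lies in
`Q(g₁)_{deg(σ_I ∏ h_i) + |I| ℓ} ⊆ Q(g₁)_{d + sℓ}`.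
-/

theorem MvPolynomial.totalDegree_prod_of_isDomain {R σ ι : Type*} [CommRing R] [IsDomain R]
    (I : Finset ι) (f : ι → MvPolynomial σ R) (hf : ∀ i ∈ I, f i ≠ 0) :
    (∏ i ∈ I, f i).totalDegree = ∑ i ∈ I, (f i).totalDegree := by
  classical
  induction I using Finset.induction_on with
  | empty => simp
  | insert a I ha ih =>
    have hI : ∀ i ∈ I, f i ≠ 0 := fun i hi => hf i (Finset.mem_insert_of_mem hi)
    rw [Finset.prod_insert ha, Finset.sum_insert ha,
      totalDegree_mul_of_isDomain (hf a (Finset.mem_insert_self a I))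
        (Finset.prod_ne_zero_iff.mpr hI), ih hI]

namespace QModSingle

variable {n : ℕ} {g₁ p q : MvPolynomial (Fin n) ℝ}

theorem mono {a b : ℕ} (hab : a ≤ b) : QModSingle g₁ a ⊆ QModSingle g₁ b := by
  rintro p ⟨σ₀, σ₁, h₀, hd₀, h₁, hd₁, rfl⟩
  exact ⟨σ₀, σ₁, h₀, hd₀.trans hab, h₁, hd₁.trans hab, rfl⟩

theorem mem_of_isSumSq {r : ℕ} (hp : IsSumSq p) (hd : p.totalDegree ≤ r) :
    p ∈ QModSingle g₁ r :=
  ⟨p, 0, hp, hd, IsSumSq.zero, by simp, by simp⟩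

theorem zero_mem {r : ℕ} : (0 : MvPolynomial (Fin n) ℝ) ∈ QModSingle g₁ r :=
  mem_of_isSumSq IsSumSq.zero (by simp)

theorem add_mem {r : ℕ} (hp : p ∈ QModSingle g₁ r) (hq : q ∈ QModSingle g₁ r) :
    p + q ∈ QModSingle g₁ r := by
  obtain ⟨σ₀, σ₁, h₀, hd₀, h₁, hd₁, rfl⟩ := hp
  obtain ⟨τ₀, τ₁, k₀, kd₀, k₁, kd₁, rfl⟩ := hq
  refine ⟨σ₀ + τ₀, σ₁ + τ₁, h₀.add k₀, (totalDegree_add _ _).trans (max_le hd₀ kd₀),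
    h₁.add k₁, ?_, by ring⟩
  rw [add_mul]
  exact (totalDegree_add _ _).trans (max_le hd₁ kd₁)

theorem sum_mem {r : ℕ} {ι : Type*} (I : Finset ι) {f : ι → MvPolynomial (Fin n) ℝ}
    (hf : ∀ i ∈ I, f i ∈ QModSingle g₁ r) : ∑ i ∈ I, f i ∈ QModSingle g₁ r := by
  classical
  induction I using Finset.induction_on with
  | empty => simpa using zero_mem
  | insert a I ha ih =>
    rw [Finset.sum_insert ha]
    exact add_mem (hf a (Finset.mem_insert_self a I))
      (ih fun i hi => hf i (Finset.mem_insert_of_mem hi))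

theorem mul_mem {a b : ℕ} (hp : p ∈ QModSingle g₁ a) (hq : q ∈ QModSingle g₁ b) :
    p * q ∈ QModSingle g₁ (a + b) := by
  obtain ⟨σ₀, σ₁, h₀, hd₀, h₁, hd₁, rfl⟩ := hp
  obtain ⟨τ₀, τ₁, k₀, kd₀, k₁, kd₁, rfl⟩ := hq
  have hdeg {x y : MvPolynomial (Fin n) ℝ} (hx : x.totalDegree ≤ a) (hy : y.totalDegree ≤ b) :
      (x * y).totalDegree ≤ a + b :=
    (totalDegree_mul x y).trans (add_le_add hx hy)
  refine ⟨σ₀ * τ₀ + σ₁ * τ₁ * (g₁ * g₁), σ₀ * τ₁ + σ₁ * τ₀,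
    (h₀.mul k₀).add ((h₁.mul k₁).mul (IsSumSq.mul_self g₁)), ?_,
    (h₀.mul k₁).add (h₁.mul k₀), ?_, by ring⟩
  · rw [show σ₁ * τ₁ * (g₁ * g₁) = (σ₁ * g₁) * (τ₁ * g₁) by ring]
    exact (totalDegree_add _ _).trans (max_le (hdeg hd₀ kd₀) (hdeg hd₁ kd₁))
  · rw [show (σ₀ * τ₁ + σ₁ * τ₀) * g₁ = σ₀ * (τ₁ * g₁) + (σ₁ * g₁) * τ₀ by ring]
    exact (totalDegree_add _ _).trans (max_le (hdeg hd₀ kd₁) (hdeg hd₁ kd₀))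

theorem prod_mem {ι : Type*} (I : Finset ι) {f : ι → MvPolynomial (Fin n) ℝ} {r : ι → ℕ}
    (hf : ∀ i ∈ I, f i ∈ QModSingle g₁ (r i)) :
    ∏ i ∈ I, f i ∈ QModSingle g₁ (∑ i ∈ I, r i) := by
  classical
  induction I using Finset.induction_on with
  | empty => simpa using mem_of_isSumSq IsSumSq.one (by simp)
  | insert a I ha ih =>
    rw [Finset.prod_insert ha, Finset.sum_insert ha]
    exact mul_mem (hf a (Finset.mem_insert_self a I))
      (ih fun i hi => hf i (Finset.mem_insert_of_mem hi))

end QModSingle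

theorem stmt_7 {n s : ℕ} (g₁ : MvPolynomial (Fin n) ℝ)
    (h : Fin s → MvPolynomial (Fin n) ℝ) (ℓ : ℕ)
    (hshift : ∀ i, h i ∈ QModSingle g₁ ((h i).totalDegree + ℓ)) (d : ℕ) :
    TPreord h d ⊆ QModSingle g₁ (d + s * ℓ) := by
  rintro p ⟨σ, hσ, hdeg, rfl⟩
  refine QModSingle.sum_mem _ fun I _ => ?_
  by_cases hz : σ I * ∏ i ∈ I, h i = 0
  · rw [hz]
    exact QModSingle.zero_mem
  have hmem : σ I * ∏ i ∈ I, h i ∈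
      QModSingle g₁ ((σ I).totalDegree + ∑ i ∈ I, ((h i).totalDegree + ℓ)) :=
    QModSingle.mul_mem (QModSingle.mem_of_isSumSq (hσ I) le_rfl)
      (QModSingle.prod_mem I fun i _ => hshift i)
  have hprod : ∏ i ∈ I, h i ≠ 0 := right_ne_zero_of_mul hz
  have hdegI : (σ I).totalDegree + ∑ i ∈ I, (h i).totalDegree ≤ d := by
    rw [← totalDegree_prod_of_isDomain I h (Finset.prod_ne_zero_iff.mp hprod),
      ← totalDegree_mul_of_isDomain (left_ne_zero_of_mul hz) hprod]
    exact hdeg I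
  have hcard : I.card ≤ s := by simpa using Finset.card_le_univ I
  refine QModSingle.mono ?_ hmem
  rw [Finset.sum_add_distrib, Finset.sum_const, smul_eq_mul, ← add_assoc]
  exact add_le_add hdegI (Nat.mul_le_mul_right ℓ hcard)
end

section
/- The polynomial (1-x²)(1-y²) does not lie in the quadratic module Q(1-x², 1-y²); i.e., there are no sums of squares σ₀, σ₁, σ₂ ∈ ℝ[x,y] with (1-x²)(1-y²) = σ₀ + (1-x²)σ₁ + (1-y²)σ₂. -/
/-!
On the edge `x = 1` of the square a certificate reads `0 = σ₀ + (1 - y²) σ₂`. Since `1 - y² > 0`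
for `|y| < 1`, both sums of squares vanish on the line `x = 1`, so each of their squares is
divisible by `x - 1`: `(x - 1)² ∣ σ₂`, and likewise `(y - 1)² ∣ σ₁` and `(x - 1)² (y - 1)² ∣ σ₀`.
Dividing the certificate by `(x - 1) (y - 1)` then gives
`(1 + x) (1 + y) = (x - 1) (y - 1) τ₀ - (x + 1) (y - 1) τ₁ - (x - 1) (y + 1) τ₂`,
which fails at `(1, 1)`.
-/

open MvPolynomial

theorem IsSumSq.map {R S F : Type*} [Semiring R] [Semiring S] [FunLike F R S]
    [RingHomClass F R S] (f : F) {s : R} (hs : IsSumSq s) : IsSumSq (f s) := by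
  induction hs with
  | zero => simp
  | sq_add a _ ih => simpa using ih.sq_add (f a)

namespace MvPolynomial

variable {R σ : Type*} [CommRing R]

theorem X_sub_C_ne_zero [Nontrivial R] (i : σ) (c : R) : (X i - C c : MvPolynomial σ R) ≠ 0 :=
  fun h ↦ one_ne_zero (α := R) (by simpa using congrArg (eval fun _ ↦ c + 1) h)

section substConst

variable [DecidableEq σ] (i : σ) (c : R)

noncomputable def substConst : MvPolynomial σ R →ₐ[R] MvPolynomial σ R :=
  aeval (Function.update X i (C c))

@[simp]
theorem substConst_X_self : substConst i c (X i) = C c := by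
  simp [substConst]

@[simp]
theorem substConst_X_of_ne {j : σ} (h : j ≠ i) : substConst i c (X j) = X j := by
  simp [substConst, h]

theorem eval_substConst (v : σ → R) (p : MvPolynomial σ R) :
    eval v (substConst i c p) = eval (Function.update v i c) p := by
  induction p using MvPolynomial.induction_on with
  | C a => simp [substConst]
  | add p q hp hq => simp [hp, hq]
  | mul_X p j hp =>
    rcases eq_or_ne j i with rfl | hj
    · simp [hp]
    · simp [hp, hj]

theorem X_sub_C_dvd_sub_substConst (p : MvPolynomial σ R) : X i - C c ∣ p - substConst i c p := by
  induction p using MvPolynomial.induction_on with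
  | C a => simp [substConst]
  | add p q hp hq => simpa [add_sub_add_comm] using dvd_add hp hq
  | mul_X p j hp =>
    have h : p * X j - substConst i c (p * X j) =
        (p - substConst i c p) * X j + substConst i c p * (X j - substConst i c (X j)) := by
      rw [map_mul]; ring
    rw [h]
    refine dvd_add (hp.mul_right _) (Dvd.dvd.mul_left ?_ _)
    rcases eq_or_ne j i with rfl | hj
    · simp
    · simp [hj]

theorem X_sub_C_dvd_iff_substConst_eq_zero {p : MvPolynomial σ R} :
    X i - C c ∣ p ↔ substConst i c p = 0 := by
  refine ⟨?_, fun h ↦ by simpa [h] using X_sub_C_dvd_sub_substConst i c p⟩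
  rintro ⟨q, rfl⟩
  simp

theorem substConst_eq_zero_iff [IsDomain R] [Infinite R] {p : MvPolynomial σ R} :
    substConst i c p = 0 ↔ ∀ v : σ → R, v i = c → eval v p = 0 := by
  refine ⟨fun h v hv ↦ ?_, fun h ↦ funext fun v ↦ ?_⟩
  · simpa [eval_substConst, ← hv] using congrArg (eval v) h
  · rw [eval_substConst, h _ (Function.update_self ..), map_zero]

theorem mul_X_sub_C_dvd [IsDomain R] {i j : σ} (hij : i ≠ j) {c d : R} {p : MvPolynomial σ R}
    (hi : substConst i c p = 0) (hj : substConst j d p = 0) :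
    (X i - C c) * (X j - C d) ∣ p := by
  obtain ⟨q, rfl⟩ := (X_sub_C_dvd_iff_substConst_eq_zero i c).2 hi
  refine mul_dvd_mul_left _ ((X_sub_C_dvd_iff_substConst_eq_zero j d).2 ?_)
  rw [map_mul, map_sub, substConst_X_of_ne j d hij, algHom_C, algebraMap_eq] at hj
  exact (mul_eq_zero.1 hj).resolve_left (X_sub_C_ne_zero i c)

end substConst

theorem IsSumSq.sq_dvd_of_eval_eq_zero [IsFormallyReal R] {Z : Set (σ → R)}
    {q s : MvPolynomial σ R} (hq : ∀ a, (∀ v ∈ Z, eval v a = 0) → q ∣ a) (hs : IsSumSq s)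
    (hZ : ∀ v ∈ Z, eval v s = 0) : q ^ 2 ∣ s := by
  induction hs with
  | zero => exact dvd_zero _
  | @sq_add a t ht ih =>
    have hsplit : ∀ v ∈ Z, eval v (a * a) = 0 ∧ eval v t = 0 := fun v hv ↦ by
      have h := hZ v hv
      rw [map_add] at h
      exact ⟨IsFormallyReal.eq_zero_of_add_right ((IsSumSq.mul_self a).map _) (ht.map _) h,
        IsFormallyReal.eq_zero_of_add_left ((IsSumSq.mul_self a).map _) (ht.map _) h⟩
    obtain ⟨b, rfl⟩ := hq a fun v hv ↦
      IsReduced.eq_zero _ ⟨2, by simpa [sq] using (hsplit v hv).1⟩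
    exact dvd_add ⟨b * b, by ring⟩ (ih fun v hv ↦ (hsplit v hv).2)

section FormallyReal

variable [DecidableEq σ] [IsDomain R] [Infinite R] [IsFormallyReal R] {s : MvPolynomial σ R}

theorem IsSumSq.sq_X_sub_C_dvd (hs : IsSumSq s) {i : σ} {c : R} (h : substConst i c s = 0) :
    (X i - C c) ^ 2 ∣ s :=
  hs.sq_dvd_of_eval_eq_zero (Z := {v | v i = c})
    (fun _ ha ↦ (X_sub_C_dvd_iff_substConst_eq_zero i c).2 ((substConst_eq_zero_iff i c).2 ha))
    ((substConst_eq_zero_iff i c).1 h)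

theorem IsSumSq.sq_mul_X_sub_C_dvd (hs : IsSumSq s) {i j : σ} (hij : i ≠ j) {c d : R}
    (hi : substConst i c s = 0) (hj : substConst j d s = 0) :
    ((X i - C c) * (X j - C d)) ^ 2 ∣ s :=
  hs.sq_dvd_of_eval_eq_zero (Z := {v | v i = c} ∪ {v | v j = d})
    (fun _ ha ↦ mul_X_sub_C_dvd hij
      ((substConst_eq_zero_iff i c).2 fun v hv ↦ ha v (.inl hv))
      ((substConst_eq_zero_iff j d).2 fun v hv ↦ ha v (.inr hv)))
    fun v hv ↦ hv.elim ((substConst_eq_zero_iff i c).1 hi v) ((substConst_eq_zero_iff j d).1 hj v)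

end FormallyReal

theorem IsSumSq.eq_zero_of_add_mul_eq_zero [LinearOrder R] [IsStrictOrderedRing R]
    {a b g : MvPolynomial σ R} (ha : IsSumSq a) (hb : IsSumSq b) {s : σ → Set R}
    (hs : ∀ j, (s j).Infinite) (hg : ∀ v ∈ Set.univ.pi s, 0 < eval v g) (h : a + g * b = 0) :
    a = 0 ∧ b = 0 := by
  have hvan : ∀ v ∈ Set.univ.pi s, eval v a = 0 ∧ eval v b = 0 := fun v hv ↦ by
    have h' := congrArg (eval v) h
    rw [map_add, map_mul, map_zero] at h'
    obtain ⟨ha', hgb⟩ := (add_eq_zero_iff_of_nonneg ((ha.map (eval v)).nonneg)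
      (mul_nonneg (hg v hv).le (hb.map (eval v)).nonneg)).1 h'
    exact ⟨ha', (mul_eq_zero.1 hgb).resolve_left (hg v hv).ne'⟩
  exact ⟨funext_set s hs fun v hv ↦ by simp [(hvan v hv).1],
    funext_set s hs fun v hv ↦ by simp [(hvan v hv).2]⟩

end MvPolynomial

theorem substConst_eq_zero_of_isSumSq_certificate {σ : Type*} [DecidableEq σ] {i j : σ}
    (hij : i ≠ j) {a b c : MvPolynomial σ ℝ} (ha : IsSumSq a) (hc : IsSumSq c)
    (h : (1 - X i ^ 2) * (1 - X j ^ 2) = a + (1 - X i ^ 2) * b + (1 - X j ^ 2) * c) :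
    substConst i 1 a = 0 ∧ substConst i 1 c = 0 := by
  refine IsSumSq.eq_zero_of_add_mul_eq_zero (ha.map _) (hc.map _) (g := 1 - X j ^ 2)
    (s := fun _ ↦ Set.Ioo (-1) 1) (fun _ ↦ Set.Ioo_infinite (by norm_num)) ?_ ?_
  · intro v hv
    have hvj := hv j trivial
    simp only [map_sub, map_one, map_pow, eval_X]
    nlinarith [hvj.1, hvj.2]
  · simpa [hij.symm] using (congrArg (substConst i 1) h).symm

theorem stmt_8 :
    ¬ ∃ σ₀ σ₁ σ₂ : MvPolynomial (Fin 2) ℝ,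
        IsSumSq σ₀ ∧ IsSumSq σ₁ ∧ IsSumSq σ₂ ∧
        (1 - X 0 ^ 2) * (1 - X 1 ^ 2) =
          σ₀ + (1 - X 0 ^ 2) * σ₁ + (1 - X 1 ^ 2) * σ₂ := by
  rintro ⟨σ₀, σ₁, σ₂, h₀, h₁, h₂, E⟩
  obtain ⟨hx₀, hx₂⟩ := substConst_eq_zero_of_isSumSq_certificate (by decide) h₀ h₂ E
  obtain ⟨hy₀, hy₁⟩ := substConst_eq_zero_of_isSumSq_certificate (i := 1) (j := 0) (b := σ₂)
    (by decide) h₀ h₁ (by linear_combination E)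
  obtain ⟨τ₀, rfl⟩ := h₀.sq_mul_X_sub_C_dvd (by decide) hx₀ hy₀
  obtain ⟨τ₁, rfl⟩ := h₁.sq_X_sub_C_dvd hy₁
  obtain ⟨τ₂, rfl⟩ := h₂.sq_X_sub_C_dvd hx₂
  have hquot := mul_left_cancel₀ (mul_ne_zero (X_sub_C_ne_zero 0 (1 : ℝ)) (X_sub_C_ne_zero 1 1))
    (b := (1 + X 0) * (1 + X 1))
    (c := (X 0 - 1) * (X 1 - 1) * τ₀ - (X 0 + 1) * (X 1 - 1) * τ₁ - (X 0 - 1) * (X 1 + 1) * τ₂)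
    (by simp only [C_1] at E ⊢; linear_combination E)
  simpa using congrArg (eval 1) hquot
end

section
/- For every real x and integers d ≥ k ≥ 0, |T_d^{(k)}(x)| ≤ d^{2k}·|T_d(x)| whenever |x| ≥ 1, where T_d^{(k)} is the k-th derivative of the degree-d Chebyshev polynomial. -/
open Polynomial

-- Chebyshev ODE: (X^2-1) T'' + X T' = n^2 T
lemma cheb_ode (n : ℤ) :
    ((X : ℝ[X])^2 - 1) * derivative^[2] (Chebyshev.T ℝ n) + X * derivative (Chebyshev.T ℝ n)
      = (n : ℝ[X])^2 * Chebyshev.T ℝ n := by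
  have h1 := Chebyshev.T_derivative_eq_U (R := ℝ) n
  have h2 := Chebyshev.add_one_mul_T_eq_poly_in_U (R := ℝ) (n - 1)
  rw [show (n : ℤ) - 1 + 1 = n by ring] at h2
  push_cast at h2
  have h3 : derivative^[2] (Chebyshev.T ℝ n)
      = (n : ℝ[X]) * derivative (Chebyshev.U ℝ (n - 1)) := by
    rw [Function.iterate_succ_apply, Function.iterate_one, h1, derivative_mul]
    simp
  rw [h3, h1]
  linear_combination (-(n : ℝ[X])) * h2

-- iterated ODE
lemma cheb_iter (n : ℤ) (k : ℕ) :
    ((X : ℝ[X])^2 - 1) * derivative^[k+2] (Chebyshev.T ℝ n)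
        + (2*(k : ℝ[X])+1) * X * derivative^[k+1] (Chebyshev.T ℝ n)
      = ((n : ℝ[X])^2 - (k : ℝ[X])^2) * derivative^[k] (Chebyshev.T ℝ n) := by
  induction k with
  | zero =>
    simpa using cheb_ode n
  | succ k ih =>
    have h := congrArg derivative ih
    simp only [derivative_mul, derivative_add, derivative_sub, derivative_one,
      derivative_X, derivative_natCast, derivative_intCast, derivative_ofNat, derivative_pow,
      mul_one, Nat.succ_eq_add_one, C_eq_natCast, Nat.cast_ofNat, map_ofNat,
      ← Function.iterate_succ_apply' derivative] at h
    push_cast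
    linear_combination h

lemma cheb_iter_eval (d : ℕ) (k : ℕ) (x : ℝ) :
    (x^2 - 1) * (derivative^[k+2] (Chebyshev.T ℝ d)).eval x
        + (2*(k:ℝ)+1) * x * (derivative^[k+1] (Chebyshev.T ℝ d)).eval x
      = ((d:ℝ)^2 - (k:ℝ)^2) * (derivative^[k] (Chebyshev.T ℝ d)).eval x := by
  have h := congrArg (eval x) (cheb_iter (d : ℤ) k)
  simpa using h

lemma natDegree_T_le : ∀ n : ℕ, (Chebyshev.T ℝ n).natDegree ≤ n
  | 0 => by simp [Chebyshev.T_zero]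
  | 1 => by simp [Chebyshev.T_one]
  | (n+2) => by
    rw [show ((n+2 : ℕ) : ℤ) = (n : ℤ) + 2 by push_cast; ring, Chebyshev.T_add_two]
    refine le_trans (natDegree_sub_le _ _) ?_
    rw [max_le_iff]
    constructor
    · refine le_trans (natDegree_mul_le) ?_
      have h1 : (2 * X : ℝ[X]).natDegree ≤ 1 := by
        refine le_trans natDegree_mul_le ?_
        simp
      have h2 : (Chebyshev.T ℝ ((n : ℤ) + 1)).natDegree ≤ n + 1 := by
        have := natDegree_T_le (n + 1)
        rwa [show ((n+1 : ℕ) : ℤ) = (n : ℤ) + 1 by push_cast; ring] at this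
      omega
    · exact le_trans (natDegree_T_le n) (by omega)

lemma iter_zero (d k : ℕ) (h : d < k) : derivative^[k] (Chebyshev.T ℝ d) = 0 :=
  iterate_derivative_eq_zero (lt_of_le_of_lt (natDegree_T_le d) h)

lemma eval_one_nonneg (d : ℕ) : ∀ k, 0 ≤ (derivative^[k] (Chebyshev.T ℝ d)).eval 1 := by
  intro k
  induction k with
  | zero =>
    simp only [Function.iterate_zero, id_eq]
    rw [show (1:ℝ) = Real.cos 0 by simp, Chebyshev.T_real_cos]
    simp
  | succ k ih =>
    by_cases hk : k ≤ d
    · have h := cheb_iter_eval d k 1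
      have hdk : (k:ℝ)^2 ≤ (d:ℝ)^2 := by
        have : (k:ℝ) ≤ (d:ℝ) := by exact_mod_cast hk
        nlinarith [Nat.cast_nonneg (α := ℝ) k]
      nlinarith [ih]
    · rw [iter_zero d (k+1) (by omega)]
      simp

lemma eval_nonneg_aux (d : ℕ) : ∀ m k, d + 1 ≤ k + m → ∀ x : ℝ, 1 ≤ x →
    0 ≤ (derivative^[k] (Chebyshev.T ℝ d)).eval x := by
  intro m
  induction m with
  | zero =>
    intro k hk x _
    rw [iter_zero d k (by omega)]
    simp
  | succ m ih =>
    intro k hk x hx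
    have hmono : MonotoneOn (fun y : ℝ => (derivative^[k] (Chebyshev.T ℝ d)).eval y)
        (Set.Ici 1) := by
      apply monotoneOn_of_deriv_nonneg (convex_Ici 1)
        ((derivative^[k] (Chebyshev.T ℝ d)).continuous).continuousOn
      · intro y hy
        exact ((derivative^[k] (Chebyshev.T ℝ d)).differentiable y).differentiableWithinAt
      · intro y hy
        rw [Polynomial.deriv, ← Function.iterate_succ_apply' derivative k]
        rw [interior_Ici] at hy
        exact ih (k+1) (by omega) y (le_of_lt hy)
    have h1 := hmono (Set.self_mem_Ici) (Set.mem_Ici.mpr hx) hx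
    exact le_trans (eval_one_nonneg d k) h1

lemma eval_nonneg (d k : ℕ) (x : ℝ) (hx : 1 ≤ x) :
    0 ≤ (derivative^[k] (Chebyshev.T ℝ d)).eval x :=
  eval_nonneg_aux d (d + 1) k (by omega) x hx

lemma main_pos (d : ℕ) (x : ℝ) (hx : 1 ≤ x) : ∀ k,
    (derivative^[k] (Chebyshev.T ℝ d)).eval x
      ≤ (d : ℝ) ^ (2 * k) * (Chebyshev.T ℝ d).eval x := by
  intro k
  induction k with
  | zero => simp
  | succ k ih =>
    have h := cheb_iter_eval d k x
    have e0 := eval_nonneg d k x hx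
    have e1 := eval_nonneg d (k+1) x hx
    have e2 := eval_nonneg d (k+2) x hx
    have hd2 : (0:ℝ) ≤ (d:ℝ)^2 := by positivity
    have hx2 : (0:ℝ) ≤ x^2 - 1 := by nlinarith
    have ha : (2*(k:ℝ)+1) * x * (derivative^[k+1] (Chebyshev.T ℝ d)).eval x
        ≤ ((d:ℝ)^2 - (k:ℝ)^2) * (derivative^[k] (Chebyshev.T ℝ d)).eval x := by
      nlinarith [mul_nonneg hx2 e2]
    have h1x : (1:ℝ) ≤ (2*(k:ℝ)+1) * x := by
      nlinarith [Nat.cast_nonneg (α := ℝ) k]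
    have hb : (derivative^[k+1] (Chebyshev.T ℝ d)).eval x
        ≤ (2*(k:ℝ)+1) * x * (derivative^[k+1] (Chebyshev.T ℝ d)).eval x := by
      nlinarith [mul_le_mul_of_nonneg_right h1x e1]
    have hc : ((d:ℝ)^2 - (k:ℝ)^2) * (derivative^[k] (Chebyshev.T ℝ d)).eval x
        ≤ (d:ℝ)^2 * (derivative^[k] (Chebyshev.T ℝ d)).eval x := by
      nlinarith [sq_nonneg ((k:ℝ))]
    have step : (derivative^[k+1] (Chebyshev.T ℝ d)).eval x
        ≤ (d:ℝ)^2 * (derivative^[k] (Chebyshev.T ℝ d)).eval x := by linarith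
    calc (derivative^[k+1] (Chebyshev.T ℝ d)).eval x
        ≤ (d:ℝ)^2 * (derivative^[k] (Chebyshev.T ℝ d)).eval x := step
      _ ≤ (d:ℝ)^2 * ((d : ℝ) ^ (2 * k) * (Chebyshev.T ℝ d).eval x) := by
          exact mul_le_mul_of_nonneg_left ih hd2
      _ = (d : ℝ) ^ (2 * (k+1)) * (Chebyshev.T ℝ d).eval x := by
          rw [show 2 * (k+1) = 2 + 2*k by ring, pow_add]
          ring

lemma T_comp_neg : ∀ n : ℕ, (Chebyshev.T ℝ n).comp (-X) = (-1 : ℝ[X])^n * Chebyshev.T ℝ n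
  | 0 => by simp [Chebyshev.T_zero]
  | 1 => by simp [Chebyshev.T_one]
  | (n+2) => by
    have h0 := T_comp_neg n
    have h1 := T_comp_neg (n+1)
    rw [show ((n+1 : ℕ) : ℤ) = (n : ℤ) + 1 by push_cast; ring] at h1
    rw [show ((n+2 : ℕ) : ℤ) = (n : ℤ) + 2 by push_cast; ring, Chebyshev.T_add_two]
    simp only [sub_comp, mul_comp, X_comp, ofNat_comp, h0, h1]
    ring

lemma iterate_derivative_comp_neg (p : ℝ[X]) : ∀ k : ℕ,
    derivative^[k] (p.comp (-X)) = (-1 : ℝ[X])^k * (derivative^[k] p).comp (-X) := by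
  intro k
  induction k with
  | zero => simp
  | succ k ih =>
    rw [Function.iterate_succ_apply', ih, derivative_mul, derivative_comp,
      show ((-1 : ℝ[X])^k) = C ((-1:ℝ)^k) by simp [map_pow], derivative_C,
      ← Function.iterate_succ_apply' derivative k p]
    simp only [derivative_neg, derivative_X, zero_mul, map_pow, map_neg, map_one]
    ring

lemma eval_neg_eq (d k : ℕ) (y : ℝ) :
    (derivative^[k] (Chebyshev.T ℝ d)).eval (-y)
      = ((-1:ℝ)^(d+k)) * (derivative^[k] (Chebyshev.T ℝ d)).eval y := by
  have h : (derivative^[k] (Chebyshev.T ℝ d)).comp (-X)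
      = (-1 : ℝ[X])^(d+k) * derivative^[k] (Chebyshev.T ℝ d) := by
    have h1 := iterate_derivative_comp_neg (Chebyshev.T ℝ d) k
    rw [T_comp_neg d] at h1
    have h2 : derivative^[k] ((-1 : ℝ[X])^d * Chebyshev.T ℝ d)
        = (-1 : ℝ[X])^d * derivative^[k] (Chebyshev.T ℝ d) := by
      rw [show ((-1 : ℝ[X])^d) = C ((-1:ℝ)^d) by simp [map_pow],
        Polynomial.iterate_derivative_C_mul]
    rw [h2] at h1
    have hunit : ((-1 : ℝ[X])^k) * ((-1 : ℝ[X])^k) = 1 := by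
      rw [← pow_add]
      exact Even.neg_one_pow (Even.add_self k)
    calc (derivative^[k] (Chebyshev.T ℝ d)).comp (-X)
        = ((-1 : ℝ[X])^k * (-1 : ℝ[X])^k) * (derivative^[k] (Chebyshev.T ℝ d)).comp (-X) := by
          rw [hunit]; ring
      _ = (-1 : ℝ[X])^k * ((-1 : ℝ[X])^d * derivative^[k] (Chebyshev.T ℝ d)) := by
          rw [mul_assoc, ← h1]
      _ = (-1 : ℝ[X])^(d+k) * derivative^[k] (Chebyshev.T ℝ d) := by
          rw [pow_add]; ring
  have := congrArg (eval y) h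
  simpa [eval_comp] using this

theorem stmt_13 (d k : ℕ) (hkd : k ≤ d) (x : ℝ) (hx : 1 ≤ |x|) :
    |(derivative^[k] (Chebyshev.T ℝ d)).eval x| ≤
      (d : ℝ) ^ (2 * k) * |(Chebyshev.T ℝ d).eval x| := by
  rcases abs_cases x with ⟨hx1, hx2⟩ | ⟨hx1, hx2⟩
  · -- x ≥ 0, so x ≥ 1
    have hx' : 1 ≤ x := hx1 ▸ hx
    have h0 : 0 ≤ (Chebyshev.T ℝ d).eval x := by simpa using eval_nonneg d 0 x hx'
    rw [abs_of_nonneg (eval_nonneg d k x hx'), abs_of_nonneg h0]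
    exact main_pos d x hx' k
  · -- x < 0, so -x ≥ 1
    have hy : 1 ≤ -x := hx1 ▸ hx
    have e1 : (derivative^[k] (Chebyshev.T ℝ d)).eval x
        = ((-1:ℝ)^(d+k)) * (derivative^[k] (Chebyshev.T ℝ d)).eval (-x) := by
      rw [← eval_neg_eq, neg_neg]
    have e2 : (Chebyshev.T ℝ d).eval x
        = ((-1:ℝ)^(d+0)) * (Chebyshev.T ℝ d).eval (-x) := by
      have := eval_neg_eq d 0 (-x)
      simpa [neg_neg] using this
    have habs : |(-1:ℝ)^(d+k)| = 1 := by rw [abs_pow]; simp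
    have habs0 : |(-1:ℝ)^(d+0)| = 1 := by rw [abs_pow]; simp
    have h0 : 0 ≤ (Chebyshev.T ℝ d).eval (-x) := by simpa using eval_nonneg d 0 (-x) hy
    rw [e1, e2, abs_mul, abs_mul, habs, habs0, one_mul, one_mul,
      abs_of_nonneg (eval_nonneg d k (-x) hy), abs_of_nonneg h0]
    exact main_pos d (-x) hy k
end

section
/- Scaled Markov bound: let ‖·‖ be a norm on ℝⁿ, p ∈ ℝ[x₁,...,x_n] of degree d, and δ ∈ (0,1). Then max over ‖x‖² ≤ 1/(1-δ) of |p(x)| is at most T_d(1/(1-δ)) times the max over ‖x‖² ≤ 1-δ of |p(x)|. -/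
open Polynomial Finset

lemma chebT_natDegree_le : ∀ n : ℕ, (Chebyshev.T ℝ n).natDegree ≤ n ∧
    (Chebyshev.T ℝ (n+1)).natDegree ≤ n+1 := by
  intro n
  induction n with
  | zero => simp [Chebyshev.T_zero, Chebyshev.T_one]
  | succ n ih =>
    refine ⟨ih.2, ?_⟩
    have h : Chebyshev.T ℝ ((n:ℤ)+1+1) = 2 * X * Chebyshev.T ℝ ((n:ℤ)+1) - Chebyshev.T ℝ n := by
      simpa [add_assoc] using Chebyshev.T_add_two ℝ n
    push_cast
    rw [h]
    refine le_trans (natDegree_sub_le _ _) ?_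
    simp only [max_le_iff]
    have h1 : ((2 : ℝ[X]) * X).natDegree ≤ 1 := le_trans natDegree_mul_le (by simp)
    exact ⟨le_trans natDegree_mul_le (by have := ih.2; omega),
      le_trans ih.1 (by omega)⟩

lemma chebT_mono (n : ℕ) : ∀ t s : ℝ, 1 ≤ t → t ≤ s →
    (1 ≤ (Chebyshev.T ℝ n).eval t ∧
     (Chebyshev.T ℝ n).eval t ≤ (Chebyshev.T ℝ (n+1)).eval t ∧
     (Chebyshev.T ℝ n).eval t ≤ (Chebyshev.T ℝ n).eval s ∧
     (Chebyshev.T ℝ n).eval s - (Chebyshev.T ℝ n).eval t ≤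
       (Chebyshev.T ℝ (n+1)).eval s - (Chebyshev.T ℝ (n+1)).eval t) := by
  induction n with
  | zero =>
    intro t s ht hts
    simp only [Nat.cast_zero, zero_add, Chebyshev.T_zero, Chebyshev.T_one, eval_one, eval_X]
    constructor; · linarith
    constructor; · linarith
    constructor; · linarith
    linarith
  | succ n ih =>
    intro t s ht hts
    have h2 : Chebyshev.T ℝ ((n:ℤ)+1+1) = 2 * X * Chebyshev.T ℝ ((n:ℤ)+1) - Chebyshev.T ℝ n := by
      simp [add_assoc, Chebyshev.T_add_two ℝ n]
    obtain ⟨a1, a2, a3, a4⟩ := ih t s ht hts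
    have b1 : 1 ≤ (Chebyshev.T ℝ ((n:ℤ)+1)).eval t := le_trans a1 a2
    have b1s : 1 ≤ (Chebyshev.T ℝ ((n:ℤ)+1)).eval s := by linarith
    push_cast
    rw [h2]
    simp only [eval_sub, eval_mul, eval_ofNat, eval_X]
    refine ⟨b1, ?_, ?_, ?_⟩
    · nlinarith
    · linarith
    · nlinarith [mul_nonneg (sub_nonneg.2 hts) (sub_nonneg.2 b1s),
        mul_nonneg (sub_nonneg.2 ht) (by linarith : (0:ℝ) ≤ (Chebyshev.T ℝ ((n:ℤ)+1)).eval s - (Chebyshev.T ℝ ((n:ℤ)+1)).eval t)]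

lemma cheb_extremal (d : ℕ) (q : ℝ[X]) (hq : q.natDegree ≤ d) (M : ℝ)
    (hb : ∀ t : ℝ, |t| ≤ 1 → |q.eval t| ≤ M) {s : ℝ} (hs : 1 ≤ s) :
    |q.eval s| ≤ (Chebyshev.T ℝ d).eval s * M := by
  have hM0 : 0 ≤ M := le_trans (abs_nonneg _) (hb 0 (by norm_num))
  rcases eq_or_lt_of_le hs with h1 | h1
  · have hT1 : (Chebyshev.T ℝ d).eval 1 = 1 := by
      have := Polynomial.Chebyshev.T_real_cos 0 d
      simpa using this
    rw [← h1, hT1, one_mul]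
    exact hb 1 (by norm_num)
  · set v : Fin (d+1) → ℝ := fun k => Real.cos (k * Real.pi / d) with hvdef
    have hv1 : ∀ k : Fin (d+1), |v k| ≤ 1 := fun k => Real.abs_cos_le_one _
    have hanti : ∀ j k : Fin (d+1), j < k → v k < v j := by
      intro j k hjk
      have hd : 1 ≤ d := by
        have h1 := k.isLt
        have h2 : (j:ℕ) < (k:ℕ) := hjk
        omega
      have hdpos : (0:ℝ) < d := by exact_mod_cast hd
      have hjk' : ((j:ℕ):ℝ) < ((k:ℕ):ℝ) := by exact_mod_cast hjk
      apply Real.cos_lt_cos_of_nonneg_of_le_pi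
      · positivity
      · rw [div_le_iff₀ hdpos]
        have : ((k:ℕ):ℝ) ≤ d := by
          have := k.isLt; exact_mod_cast Nat.lt_succ_iff.mp this
        nlinarith [Real.pi_pos]
      · exact div_lt_div_of_pos_right (by nlinarith [Real.pi_pos]) hdpos
    have hinj : Set.InjOn v (univ : Finset (Fin (d+1))) := by
      intro a _ b _ hab
      rcases lt_trichotomy a b with h | h | h
      · exact absurd hab (ne_of_gt (hanti a b h)).symm.symm
      · exact h
      · exact absurd hab (ne_of_gt (hanti b a h)).symm
    have hTv : ∀ k : Fin (d+1), (Chebyshev.T ℝ d).eval (v k) = (-1:ℝ)^(k:ℕ) := by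
      intro k
      rcases Nat.eq_zero_or_pos d with hd0 | hdpos
      · subst hd0
        have hk : (k:ℕ) = 0 := by omega
        simp [hvdef, hk]
      · have hdne : (d:ℝ) ≠ 0 := by positivity
        have : (Chebyshev.T ℝ d).eval (Real.cos ((k:ℕ) * Real.pi / d)) =
            Real.cos ((d:ℝ) * ((k:ℕ) * Real.pi / d)) :=
          Polynomial.Chebyshev.T_real_cos ((k:ℕ) * Real.pi / d) d
        rw [hvdef]
        simp only []
        rw [this]
        have harg : (d:ℝ) * ((k:ℕ) * Real.pi / d) = (k:ℕ) * Real.pi := by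
          field_simp
        rw [harg]
        have := Real.cos_nat_mul_pi_sub 0 (k:ℕ)
        simpa using this
    have hcard : #(univ : Finset (Fin (d+1))) = d+1 := by simp
    have hqdeg : q.degree < (#(univ : Finset (Fin (d+1))) : WithBot ℕ) := by
      rw [hcard]
      refine lt_of_le_of_lt degree_le_natDegree ?_
      exact_mod_cast Nat.lt_succ_iff.mpr hq
    have hTdeg : (Chebyshev.T ℝ d).degree < (#(univ : Finset (Fin (d+1))) : WithBot ℕ) := by
      rw [hcard]
      refine lt_of_le_of_lt degree_le_natDegree ?_
      exact_mod_cast Nat.lt_succ_iff.mpr (chebT_natDegree_le d).1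
    set B : Fin (d+1) → ℝ := fun k => (Lagrange.basis univ v k).eval s with hB
    have hqs : q.eval s = ∑ k, q.eval (v k) * B k := by
      conv_lhs => rw [Lagrange.eq_interpolate hinj hqdeg]
      rw [Lagrange.interpolate_apply, eval_finset_sum]
      simp [hB]
    have hTs : (Chebyshev.T ℝ d).eval s = ∑ k : Fin (d+1), (-1:ℝ)^(k.val) * B k := by
      conv_lhs => rw [Lagrange.eq_interpolate_of_eval_eq (fun k : Fin (d+1) => (-1:ℝ)^(k:ℕ)) hinj hTdeg (fun k _ => hTv k)]
      rw [Lagrange.interpolate_apply, eval_finset_sum]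
      simp [hB]
    have hsign : ∀ k : Fin (d+1), |B k| = (-1:ℝ)^(k:ℕ) * B k := by
      intro k
      have hBk : B k = ∏ j ∈ univ.erase k, ((v k - v j)⁻¹ * (s - v j)) := by
        rw [hB]
        simp only [Lagrange.basis, eval_prod]
        refine Finset.prod_congr rfl (fun j _ => ?_)
        simp [Lagrange.basisDivisor]
      have hsgn : ((-1:ℝ))^(k:ℕ) = ∏ j ∈ univ.erase k, (if j < k then (-1:ℝ) else 1) := by
        rw [Finset.prod_ite, Finset.prod_const, Finset.prod_const, one_pow, mul_one]
        congr 1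
        rw [Finset.filter_erase]
        have hfil : Finset.filter (fun j => j < k) (univ : Finset (Fin (d+1))) = Finset.Iio k := by
          ext j; simp [Finset.mem_Iio]
        rw [hfil, Finset.erase_eq_of_notMem (by simp), Fin.card_Iio]
      have hnn : 0 ≤ (-1:ℝ)^(k:ℕ) * B k := by
        rw [hBk, hsgn, ← Finset.prod_mul_distrib]
        refine Finset.prod_nonneg (fun j hj => ?_)
        have hjk : j ≠ k := Finset.ne_of_mem_erase hj
        have hsj : 0 < s - v j := by
          have := (abs_le.1 (hv1 j)).2
          linarith
        by_cases h : j < k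
        · have hvv : v k - v j < 0 := sub_neg.mpr (hanti j k h)
          have : (v k - v j)⁻¹ ≤ 0 := inv_nonpos.mpr hvv.le
          simp only [if_pos h]
          nlinarith
        · have hkj : k < j := lt_of_le_of_ne (not_lt.1 h) (Ne.symm hjk)
          have hvv : 0 < v k - v j := sub_pos.mpr (hanti k j hkj)
          simp only [if_neg h]
          positivity
      rw [← abs_of_nonneg hnn, abs_mul, abs_pow, abs_neg, abs_one, one_pow, one_mul]
    calc |q.eval s| = |∑ k, q.eval (v k) * B k| := by rw [hqs]
      _ ≤ ∑ k, |q.eval (v k) * B k| := Finset.abs_sum_le_sum_abs _ _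
      _ ≤ ∑ k : Fin (d+1), M * ((-1:ℝ)^(k.val) * B k) := by
          refine Finset.sum_le_sum (fun k _ => ?_)
          rw [abs_mul, hsign k]
          exact mul_le_mul_of_nonneg_right (hb (v k) (hv1 k))
            (by rw [← hsign k]; exact abs_nonneg _)
      _ = (Chebyshev.T ℝ d).eval s * M := by
          rw [← Finset.mul_sum, ← hTs, mul_comm]

lemma natDegree_aeval_line {n : ℕ} (p : MvPolynomial (Fin n) ℝ) (a : Fin n → ℝ) :
    (MvPolynomial.aeval (fun i => Polynomial.C (a i) * Polynomial.X) p).natDegree ≤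
      p.totalDegree := by
  rw [MvPolynomial.aeval_def, MvPolynomial.eval₂_eq]
  refine le_trans (Polynomial.natDegree_sum_le _ _) ?_
  rw [Finset.fold_max_le]
  refine ⟨Nat.zero_le _, fun m hm => ?_⟩
  refine le_trans natDegree_mul_le ?_
  have h0 : (algebraMap ℝ ℝ[X] (MvPolynomial.coeff m p)).natDegree = 0 := by
    simp [Polynomial.algebraMap_apply]
  rw [h0, zero_add]
  refine le_trans (Polynomial.natDegree_prod_le _ _) ?_
  have step : ∀ i ∈ m.support, ((C (a i) * X) ^ m i).natDegree ≤ m i := by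
    intro i _
    have h1 : (C (a i) * X : ℝ[X]).natDegree ≤ 1 := by
      refine le_trans natDegree_mul_le ?_
      simp
    have := natDegree_pow_le_of_le (p := C (a i) * X) (m := 1) (m i) h1
    simpa using this
  refine le_trans (Finset.sum_le_sum step) ?_
  exact MvPolynomial.le_totalDegree hm

lemma eval_aeval_line {n : ℕ} (p : MvPolynomial (Fin n) ℝ) (a : Fin n → ℝ) (t : ℝ) :
    ((MvPolynomial.aeval (fun i => Polynomial.C (a i) * Polynomial.X) p : ℝ[X])).eval t =
      MvPolynomial.eval (fun i => a i * t) p := by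
  induction p using MvPolynomial.induction_on with
  | C r => simp [MvPolynomial.algebraMap_eq]
  | add f g hf hg => simp [hf, hg]
  | mul_X f i hf => simp [hf, mul_assoc]

open Polynomial MvPolynomial

theorem stmt_14 (n d : ℕ) (N : Seminorm ℝ (Fin n → ℝ))
    (hN : ∀ x, N x = 0 → x = 0)
    (p : MvPolynomial (Fin n) ℝ) (hp : p.totalDegree ≤ d)
    (δ : ℝ) (hδ0 : 0 < δ) (hδ1 : δ < 1) (M : ℝ)
    (hM : ∀ y : Fin n → ℝ, (N y) ^ 2 ≤ 1 - δ → |MvPolynomial.eval y p| ≤ M) :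
    ∀ x : Fin n → ℝ, (N x) ^ 2 ≤ 1 / (1 - δ) →
      |MvPolynomial.eval x p| ≤
        (Polynomial.Chebyshev.T ℝ d).eval (1 / (1 - δ)) * M := by
  intro x hx
  have hδ' : (0:ℝ) < 1 - δ := by linarith
  set c := Real.sqrt (1 - δ) with hc
  have hc0 : 0 < c := Real.sqrt_pos.2 hδ'
  have hc2 : c^2 = 1 - δ := Real.sq_sqrt hδ'.le
  have hM0 : 0 ≤ M := by
    refine le_trans (abs_nonneg _) (hM 0 ?_)
    rw [map_zero]
    nlinarith
  have hσ1 : (1:ℝ) ≤ 1/(1-δ) := by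
    rw [le_div_iff₀ hδ']; nlinarith
  have hT1 : 1 ≤ (Chebyshev.T ℝ d).eval (1/(1-δ)) := (chebT_mono d _ _ hσ1 le_rfl).1
  by_cases hcase : (N x)^2 ≤ 1 - δ
  · refine le_trans (hM x hcase) ?_
    nlinarith
  · push_neg at hcase
    have hNx : c < N x := by nlinarith [apply_nonneg N x]
    have hNxpos : 0 < N x := lt_trans hc0 hNx
    set a : ℝ := c / N x with ha
    have ha0 : 0 < a := div_pos hc0 hNxpos
    set q : ℝ[X] := MvPolynomial.aeval
      (fun i => Polynomial.C (a * x i) * Polynomial.X) p with hqdef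
    have hqd : q.natDegree ≤ d := le_trans (natDegree_aeval_line p _) hp
    have hqb : ∀ t : ℝ, |t| ≤ 1 → |q.eval t| ≤ M := by
      intro t ht
      rw [hqdef, eval_aeval_line]
      apply hM
      have hy : (fun i => (a * x i) * t) = (a * t) • x := by
        funext i
        simp only [Pi.smul_apply, smul_eq_mul]
        ring
      rw [hy, map_smul_eq_mul]
      have hNa : |a * t| * N x = c * |t| := by
        rw [abs_mul, abs_of_pos ha0, ha]
        field_simp
      rw [Real.norm_eq_abs, hNa]
      have h2 : |t|^2 ≤ 1 := by nlinarith [abs_nonneg t]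
      calc (c*|t|)^2 = c^2*|t|^2 := by ring
        _ ≤ c^2 * 1 := mul_le_mul_of_nonneg_left h2 (sq_nonneg c)
        _ = 1 - δ := by rw [mul_one, hc2]
    set s : ℝ := N x / c with hs
    have hs1 : 1 ≤ s := le_of_lt ((one_lt_div hc0).2 hNx)
    have hqs : q.eval s = MvPolynomial.eval x p := by
      have hpoint : (fun i => (a * x i) * s) = x := by
        funext i
        rw [ha, hs]
        field_simp
      rw [hqdef, eval_aeval_line, hpoint]
    have key := cheb_extremal d q hqd M hqb hs1
    rw [hqs] at key
    refine le_trans key ?_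
    have hsσ : s ≤ 1/(1-δ) := by
      have hr2 : (1/(1-δ)*c)^2 = 1/(1-δ) := by
        rw [mul_pow, hc2]
        field_simp
      have hr0 : 0 < 1/(1-δ)*c := by positivity
      rw [hs, div_le_iff₀ hc0]
      nlinarith [apply_nonneg N x, hr2, hr0, hx]
    have hmono := (chebT_mono d s (1/(1-δ)) hs1 hsσ).2.2.1
    exact mul_le_mul_of_nonneg_right hmono hM0
end
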